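/- In the three-state process on the integer lattice Z with initial state probabilities p_w, p_s, p_e > 0 summing to 1 (assigned independently to each lattice point), the probability that lattice point 0 is eventually in state s is strictly greater than 1/(1 + p_w/p_s). -/

import Mathlib

/-!
Let `n ≥ 0` be the first non-empty site at or to the right of `0`. If it is spreading, the
spread reaches `0` after `n` rounds; this happens with probability
`∑ pe ^ n * ps = ps / (1 - pe) = 1 / (1 + pw / ps)`. The strict inequality comes from a disjoint
event of positive probability in which the right side is walled off but `0` is reached from the
left: the pattern `s e w` on the sites `-1, 0, 1`.
-/

open MeasureTheory

/-- The three states of the simplified process on `ℤ`: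
`w` (wall), `s` (spreading), `e` (empty). -/
inductive St where
  | w : St
  | s : St
  | e : St
deriving DecidableEq

instance : MeasurableSpace St := ⊤

/-- One synchronous round: points in state `w` or `s` keep their state forever; a point
in state `e` with at least one of its two nearest neighbors in state `s` changes to `s`. -/
def evolve (ω : ℤ → St) : ℤ → St := fun i =>
  match ω i with
  | St.e => if ω (i - 1) = St.s ∨ ω (i + 1) = St.s then St.s else St.e
  | x => x

/-- The initial probability of each state. -/
def stProb (pw ps pe : ℝ) : St → ℝ
  | St.w => pw
  | St.s => ps
  | St.e => pe

section Dynamics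

variable {ω : ℤ → St} {i : ℤ}

lemma evolve_eq_w_iff : evolve ω i = St.w ↔ ω i = St.w := by
  unfold evolve; split <;> simp_all; split_ifs <;> simp

lemma iterate_evolve_eq_w_iff (t : ℕ) : evolve^[t] ω i = St.w ↔ ω i = St.w := by
  induction t with
  | zero => rfl
  | succ t ih => rw [Function.iterate_succ_apply', evolve_eq_w_iff, ih]

lemma evolve_eq_s_of_ne_w (hi : ω i ≠ St.w) (hnbr : ω (i - 1) = St.s ∨ ω (i + 1) = St.s) :
    evolve ω i = St.s := by
  cases h : ω i <;> simp_all [evolve]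

lemma iterate_evolve_eq_s_of_right (n : ℕ) (a : ℤ) (hs : ω (a + n) = St.s)
    (hnw : ∀ k < n, ω (a + k) ≠ St.w) : evolve^[n] ω a = St.s := by
  induction n generalizing a with
  | zero => simpa using hs
  | succ n ih =>
    have hright : evolve^[n] ω (a + 1) = St.s :=
      ih (a + 1) (by rw [← hs]; push_cast; ring_nf)
        fun k hk => by simpa [add_assoc, add_comm (1 : ℤ)] using hnw (k + 1) (by omega)
    rw [Function.iterate_succ_apply']
    refine evolve_eq_s_of_ne_w ?_ (Or.inr hright)
    rw [Ne, iterate_evolve_eq_w_iff]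
    simpa using hnw 0 n.succ_pos

end Dynamics

def HasIIDStates (pw ps pe : ℝ) (μ : Measure (ℤ → St)) : Prop :=
  ∀ (F : Finset ℤ) (f : ℤ → St),
    μ {ω | ∀ i ∈ F, ω i = f i} = ∏ i ∈ F, ENNReal.ofReal (stProb pw ps pe (f i))

def emptiesThenS (n : ℕ) : Set (ℤ → St) :=
  {ω | ∀ i ∈ Finset.Icc (0 : ℤ) n, ω i = if i = n then St.s else St.e}

def sEmptyWall : Set (ℤ → St) :=
  {ω | ∀ i ∈ ({-1, 0, 1} : Finset ℤ), ω i = if i < 0 then St.s else if i = 0 then St.e else St.w}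

lemma measurableSet_setOf_forall_mem_eq (F : Finset ℤ) (f : ℤ → St) :
    MeasurableSet {ω : ℤ → St | ∀ i ∈ F, ω i = f i} := by
  simp only [Set.ofPred_forall]
  exact .biInter F.countable_toSet fun i _ =>
    measurable_pi_apply (X := fun _ => St) i (t := {f i}) trivial

lemma mem_emptiesThenS {n : ℕ} {ω : ℤ → St} :
    ω ∈ emptiesThenS n ↔ ω n = St.s ∧ ∀ i : ℤ, 0 ≤ i → i < n → ω i = St.e := by
  simp only [emptiesThenS, Set.mem_ofPred_eq, Finset.mem_Icc]
  refine ⟨fun h => ⟨by simpa using h n (by simp), fun i h0 hn => ?_⟩, fun ⟨hs, he⟩ i hi => ?_⟩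
  · simpa [hn.ne] using h i ⟨h0, hn.le⟩
  · split_ifs with hin
    · exact hin ▸ hs
    · exact he i hi.1 (lt_of_le_of_ne hi.2 hin)

lemma mem_sEmptyWall {ω : ℤ → St} :
    ω ∈ sEmptyWall ↔ ω (-1) = St.s ∧ ω 0 = St.e ∧ ω 1 = St.w := by
  simp [sEmptyWall]

lemma pairwise_disjoint_emptiesThenS : Pairwise (Function.onFun Disjoint emptiesThenS) := by
  refine (pairwise_disjoint_on _).mpr fun n m hnm => ?_
  refine Set.disjoint_left.mpr fun ω hn hm => ?_
  have h1 := (mem_emptiesThenS.mp hn).1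
  rw [(mem_emptiesThenS.mp hm).2 n (by positivity) (by exact_mod_cast hnm)] at h1
  exact St.noConfusion h1

lemma disjoint_iUnion_emptiesThenS_sEmptyWall : Disjoint (⋃ n, emptiesThenS n) sEmptyWall := by
  refine Set.disjoint_iUnion_left.mpr fun n => Set.disjoint_left.mpr fun ω hn hw => ?_
  obtain ⟨-, h0, h1⟩ := mem_sEmptyWall.mp hw
  obtain ⟨hs, he⟩ := mem_emptiesThenS.mp hn
  rcases Nat.lt_trichotomy n 1 with hlt | rfl | hgt
  · obtain rfl : n = 0 := by omega
    simp_all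
  · simp_all
  · simpa [h1] using he 1 zero_le_one (by exact_mod_cast hgt)

lemma iUnion_emptiesThenS_union_sEmptyWall_subset :
    (⋃ n, emptiesThenS n) ∪ sEmptyWall ⊆ {ω | ∃ t : ℕ, evolve^[t] ω 0 = St.s} := by
  rintro ω (hω | hω)
  · obtain ⟨n, hn⟩ := Set.mem_iUnion.mp hω
    obtain ⟨hs, he⟩ := mem_emptiesThenS.mp hn
    refine ⟨n, iterate_evolve_eq_s_of_right n 0 (by simpa using hs) fun k hk => ?_⟩
    simp [he k (by positivity) (by exact_mod_cast hk)]
  · obtain ⟨hs, he, -⟩ := mem_sEmptyWall.mp hω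
    exact ⟨1, evolve_eq_s_of_ne_w (by simp [he]) (Or.inl hs)⟩

section Measures

variable {pw ps pe : ℝ} {μ : Measure (ℤ → St)}

lemma measure_emptiesThenS (hiid : HasIIDStates pw ps pe μ) (n : ℕ) :
    μ (emptiesThenS n) = ENNReal.ofReal pe ^ n * ENNReal.ofReal ps := by
  rw [emptiesThenS, hiid, ← Finset.Ico_insert_right (by positivity), Finset.prod_insert (by simp),
    if_pos rfl, mul_comm, Finset.prod_congr rfl fun i hi => by
      rw [if_neg (Finset.mem_Ico.mp hi).2.ne]]
  simp [stProb]

lemma measure_sEmptyWall (hiid : HasIIDStates pw ps pe μ) :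
    μ sEmptyWall = ENNReal.ofReal ps * ENNReal.ofReal pe * ENNReal.ofReal pw := by
  rw [sEmptyWall, hiid]
  simp [stProb, mul_assoc]

lemma toReal_measure_iUnion_emptiesThenS_union_sEmptyWall (hiid : HasIIDStates pw ps pe μ)
    (hps : 0 ≤ ps) (hpe : 0 ≤ pe) (hpe1 : pe < 1) (hpw : 0 ≤ pw) :
    (μ ((⋃ n, emptiesThenS n) ∪ sEmptyWall)).toReal = ps / (1 - pe) + ps * pe * pw := by
  have hgeom : (1 - ENNReal.ofReal pe)⁻¹ = ENNReal.ofReal (1 - pe)⁻¹ := by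
    rw [← ENNReal.ofReal_one, ← ENNReal.ofReal_sub _ hpe, ENNReal.ofReal_inv_of_pos (by linarith)]
  rw [measure_union disjoint_iUnion_emptiesThenS_sEmptyWall (measurableSet_setOf_forall_mem_eq _ _),
    measure_iUnion pairwise_disjoint_emptiesThenS fun n => measurableSet_setOf_forall_mem_eq _ _]
  simp only [measure_emptiesThenS hiid, measure_sEmptyWall hiid, ENNReal.tsum_mul_right,
    ENNReal.tsum_geometric, hgeom]
  rw [ENNReal.toReal_add (by finiteness) (by finiteness)]
  simp only [ENNReal.toReal_mul, ENNReal.toReal_ofReal, hps, hpe, hpw,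
    inv_nonneg.mpr (sub_nonneg.mpr hpe1.le)]
  ring

end Measures

/-- In the three-state process on `ℤ` with i.i.d. initial states (`w`, `s`, `e` with
probabilities `p_w, p_s, p_e > 0` summing to `1`), the probability that lattice point `0`
is eventually in state `s` is strictly greater than `1/(1 + p_w/p_s)`. -/
theorem spreading_probability (pw ps pe : ℝ) (hw : 0 < pw) (hs : 0 < ps) (he : 0 < pe)
    (hsum : pw + ps + pe = 1) (μ : Measure (ℤ → St)) [IsProbabilityMeasure μ]
    (hiid : ∀ (F : Finset ℤ) (f : ℤ → St),
      μ {ω | ∀ i ∈ F, ω i = f i} = ∏ i ∈ F, ENNReal.ofReal (stProb pw ps pe (f i))) :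
    1 / (1 + pw / ps) < (μ {ω | ∃ t : ℕ, (evolve^[t] ω) 0 = St.s}).toReal := by
  have hpe1 : pe < 1 := by linarith
  calc 1 / (1 + pw / ps) = ps / (1 - pe) := by
        rw [show 1 - pe = ps + pw by linarith]; field_simp
    _ < ps / (1 - pe) + ps * pe * pw := lt_add_of_pos_right _ (by positivity)
    _ = (μ ((⋃ n, emptiesThenS n) ∪ sEmptyWall)).toReal :=
        (toReal_measure_iUnion_emptiesThenS_union_sEmptyWall hiid hs.le he.le hpe1 hw.le).symm
    _ ≤ (μ {ω | ∃ t : ℕ, (evolve^[t] ω) 0 = St.s}).toReal :=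
        ENNReal.toReal_mono (measure_ne_top _ _)
          (measure_mono iUnion_emptiesThenS_union_sEmptyWall_subset)
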